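/- Functional Gauss–Bonnet theorem: let G be a finite simple graph on a finite vertex set V. For every real t, f_G(t) = 1 + Σ_{v ∈ V} ∫_0^t f_{S(v)}(s) ds, where f_G is the simplex generating polynomial of G and S(v) is the unit sphere of v (the subgraph induced on the neighbor set of v). Equivalently, f_G(t) - 1 = Σ_{v ∈ V} K_v(t) where K_v(t) := ∫_0^t f_{S(v)}(s) ds is the curvature function at v. (Evaluating at t = -1 yields the Gauss–Bonnet formula χ(G) = Σ_v K_v for the Euler–Levitt curvature.) -/

import Mathlib

/-- The cycle graph `C_n` on `Fin n`: `i ~ j` iff `i - j ≡ ±1 (mod n)`. -/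
def cycleGraph (n : ℕ) : SimpleGraph (Fin n) where
  Adj i j := i ≠ j ∧ ((i - j : Fin n).val = 1 ∨ (j - i : Fin n).val = 1)
  symm := by
    constructor
    intro i j h
    exact ⟨h.1.symm, h.2.symm⟩
  loopless := by
    constructor
    intro i h
    exact h.1 rfl

instance (n : ℕ) : DecidableRel (cycleGraph n).Adj :=
  fun a b => inferInstanceAs (Decidable (a ≠ b ∧ ((a - b : Fin n).val = 1 ∨ (b - a : Fin n).val = 1)))

/-- The path graph `P_n` on `Fin n`: `i ~ j` iff `|i - j| = 1`. -/
def pathGraph' (n : ℕ) : SimpleGraph (Fin n) where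
  Adj i j := (i : ℕ) + 1 = (j : ℕ) ∨ (j : ℕ) + 1 = (i : ℕ)
  symm := by
    constructor
    intro i j h
    exact h.symm
  loopless := by
    constructor
    intro i h
    rcases h with h | h <;> omega

instance (n : ℕ) : DecidableRel (pathGraph' n).Adj :=
  fun a b => inferInstanceAs (Decidable ((a : ℕ) + 1 = (b : ℕ) ∨ (b : ℕ) + 1 = (a : ℕ)))

/-- The finset of all nonempty cliques of a finite simple graph. -/
noncomputable def cliquesOf {V : Type*} [Finite V] (G : SimpleGraph V) : Finset (Finset V) := by
  classical
  letI : Fintype V := Fintype.ofFinite V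
  exact Finset.univ.filter (fun s : Finset V => s.Nonempty ∧ G.IsClique (s : Set V))

/-- The number of cliques with exactly `j` elements (the empty clique counting for `j = 0`). -/
noncomputable def cliqueCount {V : Type*} [Finite V] (G : SimpleGraph V) (j : ℕ) : ℕ := by
  classical
  letI : Fintype V := Fintype.ofFinite V
  exact (Finset.univ.filter (fun s : Finset V => G.IsClique (s : Set V) ∧ s.card = j)).card

/-- The Euler characteristic of the clique (Whitney) complex of `G`. -/
noncomputable def eulerChar {V : Type*} [Finite V] (G : SimpleGraph V) : ℤ :=
  ∑ c ∈ cliquesOf G, (-1 : ℤ) ^ (c.card + 1)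

/-- The simplex generating function `f_G(t) = 1 + ∑_c t^{|c|}`. -/
noncomputable def fgen {V : Type*} [Finite V] (G : SimpleGraph V) (t : ℝ) : ℝ :=
  1 + ∑ c ∈ cliquesOf G, t ^ c.card

lemma mem_cliquesOf {V : Type*} [Finite V] {G : SimpleGraph V} {c : Finset V} :
    c ∈ cliquesOf G ↔ c.Nonempty ∧ G.IsClique (c : Set V) := by
  simp [cliquesOf]

lemma integral_fgen {W : Type*} [Finite W] (H : SimpleGraph W) (t : ℝ) :
    ∫ s in (0:ℝ)..t, fgen H s
      = t + ∑ c ∈ cliquesOf H, t ^ (c.card + 1) / ((c.card : ℝ) + 1) := by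
  have h1 : IntervalIntegrable (fun _ : ℝ => (1:ℝ)) MeasureTheory.volume 0 t :=
    intervalIntegrable_const
  have h2 : ∀ c ∈ cliquesOf H, IntervalIntegrable (fun s : ℝ => s ^ c.card)
      MeasureTheory.volume 0 t := fun c _ => intervalIntegral.intervalIntegrable_pow _
  have hsum : IntervalIntegrable (fun s : ℝ => ∑ c ∈ cliquesOf H, s ^ c.card)
      MeasureTheory.volume 0 t :=
    (Continuous.intervalIntegrable (by continuity) _ _)
  simp only [fgen]
  rw [intervalIntegral.integral_add h1 hsum, intervalIntegral.integral_finset_sum h2]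
  simp [integral_pow]

lemma key {V : Type*} [Fintype V] (G : SimpleGraph V) (t : ℝ) :
    ∑ v : V, ∑ c ∈ cliquesOf (G.induce (G.neighborSet v)),
        t ^ (c.card + 1) / ((c.card : ℝ) + 1)
      = ∑ c ∈ (cliquesOf G).filter (fun c => 2 ≤ c.card), t ^ c.card := by
  classical
  have hR : ∀ c ∈ (cliquesOf G).filter (fun c => 2 ≤ c.card),
      (t ^ c.card : ℝ) = ∑ _v ∈ c, t ^ c.card / (c.card : ℝ) := by
    intro c hc
    have hcard : (2:ℕ) ≤ c.card := (Finset.mem_filter.mp hc).2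
    have hne : (c.card : ℝ) ≠ 0 := Nat.cast_ne_zero.mpr (by omega)
    rw [Finset.sum_const, nsmul_eq_mul, mul_div_cancel₀ _ hne]
  have hL := Finset.sum_sigma' Finset.univ
    (fun v : V => cliquesOf (G.induce (G.neighborSet v)))
    (fun v c => t ^ (c.card + 1) / ((c.card : ℝ) + 1))
  have hR2 := Finset.sum_sigma' ((cliquesOf G).filter (fun c => 2 ≤ c.card))
    (fun c => c) (fun c _v => t ^ c.card / (c.card : ℝ))
  rw [Finset.sum_congr rfl hR, hL, hR2]
  refine Finset.sum_nbij'
    (fun p => ⟨insert p.1 (p.2.image Subtype.val), p.1⟩)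
    (fun q => ⟨q.2, (q.1.erase q.2).subtype (· ∈ G.neighborSet q.2)⟩)
    ?_ ?_ ?_ ?_ ?_
  · rintro ⟨v, c⟩ hp
    simp only [Finset.mem_sigma, Finset.mem_univ, true_and] at hp
    obtain ⟨hne, hcl⟩ := mem_cliquesOf.mp hp
    have hsub : ∀ x ∈ c.image Subtype.val, x ∈ G.neighborSet v := by
      intro x hx
      obtain ⟨a, _, rfl⟩ := Finset.mem_image.mp hx
      exact a.2
    have hvnot : v ∉ c.image Subtype.val := fun h =>
      G.irrefl (hsub v h)
    have hcardimg : (c.image Subtype.val).card = c.card :=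
      Finset.card_image_of_injective _ Subtype.val_injective
    simp only [Finset.mem_sigma, Finset.mem_filter]
    refine ⟨⟨mem_cliquesOf.mpr ⟨⟨v, Finset.mem_insert_self _ _⟩, ?_⟩, ?_⟩,
      Finset.mem_insert_self _ _⟩
    · intro x hx y hy hxy
      simp only [Finset.coe_insert, Set.mem_insert_iff, Finset.mem_coe] at hx hy
      rcases hx with rfl | hx
      · rcases hy with rfl | hy
        · exact absurd rfl hxy
        · exact hsub y hy
      · rcases hy with rfl | hy
        · exact (hsub x hx).symm
        · obtain ⟨a, ha, rfl⟩ := Finset.mem_image.mp hx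
          obtain ⟨b, hb, rfl⟩ := Finset.mem_image.mp hy
          have hab : a ≠ b := fun h => hxy (by rw [h])
          exact hcl ha hb hab
    · rw [Finset.card_insert_of_notMem hvnot, hcardimg]
      have := Finset.card_pos.mpr hne
      omega
  · rintro ⟨c, v⟩ hq
    simp only [Finset.mem_sigma, Finset.mem_filter] at hq
    obtain ⟨⟨hcq, hcard⟩, hv⟩ := hq
    obtain ⟨-, hcl⟩ := mem_cliquesOf.mp hcq
    have hnbr : ∀ x ∈ c.erase v, x ∈ G.neighborSet v := by
      intro x hx
      exact hcl hv (Finset.mem_of_mem_erase hx) (Finset.ne_of_mem_erase hx).symm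
    simp only [Finset.mem_sigma, Finset.mem_univ, true_and]
    refine mem_cliquesOf.mpr ⟨?_, ?_⟩
    · have : (c.erase v).Nonempty := by
        rw [← Finset.card_pos, Finset.card_erase_of_mem hv]; omega
      obtain ⟨x, hx⟩ := this
      exact ⟨⟨x, hnbr x hx⟩, Finset.mem_subtype.mpr hx⟩
    · intro a ha b hb hab
      simp only [Finset.mem_coe, Finset.mem_subtype] at ha hb
      exact hcl (Finset.mem_of_mem_erase ha) (Finset.mem_of_mem_erase hb)
        (fun h => hab (Subtype.ext h))
  · rintro ⟨v, c⟩ hp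
    simp only [Finset.mem_sigma, Finset.mem_univ, true_and] at hp
    have hvnot : v ∉ c.image Subtype.val := by
      intro h
      obtain ⟨a, _, ha⟩ := Finset.mem_image.mp h
      exact G.irrefl (ha ▸ a.2)
    have h1 : ((insert v (c.image Subtype.val)).erase v) = c.image Subtype.val :=
      Finset.erase_insert hvnot
    refine congrArg (Sigma.mk v) ?_
    rw [h1]
    ext a
    simp only [Finset.mem_subtype, Finset.mem_image]
    constructor
    · rintro ⟨b, hb, hba⟩
      rwa [← Subtype.ext hba]
    · intro ha
      exact ⟨a, ha, rfl⟩
  · rintro ⟨c, v⟩ hq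
    simp only [Finset.mem_sigma, Finset.mem_filter] at hq
    obtain ⟨⟨hcq, hcard⟩, hv⟩ := hq
    obtain ⟨-, hcl⟩ := mem_cliquesOf.mp hcq
    have hnbr : ∀ x ∈ c.erase v, x ∈ G.neighborSet v := fun x hx =>
      hcl hv (Finset.mem_of_mem_erase hx) (Finset.ne_of_mem_erase hx).symm
    refine congrArg (fun s => Sigma.mk s v) ?_
    ext x
    simp only [Finset.mem_insert, Finset.mem_image]
    constructor
    · rintro (rfl | ⟨a, ha, rfl⟩)
      · exact hv
      · exact Finset.mem_of_mem_erase (Finset.mem_subtype.mp ha)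
    · intro hx
      by_cases hxv : x = v
      · exact Or.inl hxv
      · exact Or.inr ⟨⟨x, hnbr x (Finset.mem_erase.mpr ⟨hxv, hx⟩)⟩,
          Finset.mem_subtype.mpr (Finset.mem_erase.mpr ⟨hxv, hx⟩), rfl⟩
  · rintro ⟨v, c⟩ hp
    simp only [Finset.mem_sigma, Finset.mem_univ, true_and] at hp
    obtain ⟨hne, _⟩ := mem_cliquesOf.mp hp
    have hvnot : v ∉ c.image Subtype.val := by
      intro h
      obtain ⟨a, _, ha⟩ := Finset.mem_image.mp h
      exact G.irrefl (ha ▸ a.2)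
    have : (insert v (c.image Subtype.val)).card = c.card + 1 := by
      rw [Finset.card_insert_of_notMem hvnot,
        Finset.card_image_of_injective _ Subtype.val_injective]
    simp only [this]
    push_cast
    ring


/-- Functional Gauss–Bonnet theorem: `f_G(t) = 1 + ∑_v ∫_0^t f_{S(v)}(s) ds`, where
`S(v)` is the unit sphere of the vertex `v`. -/
theorem functional_gaussBonnet {V : Type*} [Fintype V] (G : SimpleGraph V) (t : ℝ) :
    fgen G t = 1 + ∑ v : V, ∫ s in (0 : ℝ)..t, fgen (G.induce (G.neighborSet v)) s := by
  classical
  have hint : ∀ v : V, (∫ s in (0:ℝ)..t, fgen (G.induce (G.neighborSet v)) s)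
      = t + ∑ c ∈ cliquesOf (G.induce (G.neighborSet v)),
          t ^ (c.card + 1) / ((c.card : ℝ) + 1) := fun v => integral_fgen _ t
  rw [Finset.sum_congr rfl (fun v _ => hint v), Finset.sum_add_distrib, key]
  -- singleton part
  have himg : (cliquesOf G).filter (fun c => c.card = 1)
      = Finset.univ.image (fun v : V => ({v} : Finset V)) := by
    ext c
    simp only [Finset.mem_filter, Finset.mem_image, Finset.mem_univ, true_and,
      mem_cliquesOf, Finset.card_eq_one]
    constructor
    · rintro ⟨-, a, rfl⟩
      exact ⟨a, rfl⟩
    · rintro ⟨a, rfl⟩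
      exact ⟨⟨Finset.singleton_nonempty a, by simp⟩, a, rfl⟩
  have hsingle : ∑ c ∈ (cliquesOf G).filter (fun c => c.card = 1), t ^ c.card
      = ∑ _v : V, t := by
    rw [himg, Finset.sum_image (fun a _ b _ h => Finset.singleton_injective h)]
    simp
  have hsplit : ∑ c ∈ cliquesOf G, t ^ c.card
      = ∑ c ∈ (cliquesOf G).filter (fun c => c.card = 1), t ^ c.card
        + ∑ c ∈ (cliquesOf G).filter (fun c => 2 ≤ c.card), t ^ c.card := by
    rw [← Finset.sum_filter_add_sum_filter_not (cliquesOf G) (fun c => c.card = 1)]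
    congr 1
    apply Finset.sum_congr _ (fun _ _ => rfl)
    apply Finset.filter_congr
    intro c hc
    have := Finset.card_pos.mpr (mem_cliquesOf.mp hc).1
    constructor <;> intro <;> omega
  show 1 + ∑ c ∈ cliquesOf G, t ^ c.card = _
  rw [hsplit, hsingle]
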